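/- arXiv:2210.07234 — 9 statements merged into one kernel-verified Lean document; each statement's English description precedes it below -/
import Mathlib

section
/- For every integer r ≥ 1, the recursively defined set A₁^{(r)} equals { v ⊕ 1⃗ : v ∈ A₀^{(r)} }, where 1⃗ denotes the all-ones string of length m^r. (Structure of the neighborhoods of the recursively concatenated code.) -/
/-- `BS m r` is the type of length-`m^(r+1)` bitstrings, viewed recursively as
`m`-tuples of length-`m^r` bitstrings; `BS m 0` are ordinary length-`m` bitstrings. -/
@[reducible] def BS (m : ℕ) : ℕ → Type
  | 0 => Fin m → ZMod 2
  | (r+1) => Fin m → BS m r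

/-- The all-ones bitstring of length `m^(r+1)`. -/
def BSones (m : ℕ) : (r : ℕ) → BS m r
  | 0 => fun _ => 1
  | (r+1) => fun _ => BSones m r

/-- Coordinatewise addition (XOR) of bitstrings of length `m^(r+1)`. -/
def BSadd (m : ℕ) : (r : ℕ) → BS m r → BS m r → BS m r
  | 0, a, b => a + b
  | (r+1), a, b => fun i => BSadd m r (a i) (b i)

/-- `Arec m d C r b` is the set `A_b^{(r+1)}` from the recursively concatenated code:
for `r = 0` it is `A_b = { w ⊕ b·1⃗ ⊕ x : w ∈ C, |x| ≤ d }`, and for `r + 1` it is the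
set of `m`-tuples `(v₁,…,v_m)` for which there exist `w ∈ C ⊕ b·1⃗` and `x` with
`|x| ≤ d` such that `v i ∈ A_{w i}^{(r)}` whenever `x i = 0`. -/
def Arec (m d : ℕ) (C : Set (Fin m → ZMod 2)) : (r : ℕ) → ZMod 2 → Set (BS m r)
  | 0, b => {v | ∃ w ∈ C, ∃ x : Fin m → ZMod 2, hammingNorm x ≤ d ∧
      v = w + (fun _ : Fin m => b) + x}
  | (r+1), b => {v | ∃ w : Fin m → ZMod 2, (∃ c ∈ C, w = c + (fun _ : Fin m => b)) ∧
      ∃ x : Fin m → ZMod 2, hammingNorm x ≤ d ∧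
        ∀ i, x i = 0 → v i ∈ Arec m d C r (w i)}

lemma BSadd_cancel (m : ℕ) (r : ℕ) (a b : BS m r) :
    BSadd m r (BSadd m r a b) b = a := by
  induction r with
  | zero =>
    show (a + b) + b = a
    ext i
    have : (b : Fin m → ZMod 2) i + b i = 0 := CharTwo.add_self_eq_zero _
    simp [add_assoc, this]
  | succ r ih => funext i; exact ih (a i) (b i)

lemma key (m d : ℕ) (C : Set (Fin m → ZMod 2)) : ∀ (r : ℕ) (b : ZMod 2),
    Arec m d C r (b+1) = {v | ∃ u ∈ Arec m d C r b, v = BSadd m r u (BSones m r)} := by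
  intro r
  induction r with
  | zero =>
    intro b
    ext v
    simp only [Arec, Set.mem_setOf_eq]
    constructor
    · rintro ⟨w, hw, x, hx, rfl⟩
      refine ⟨w + (fun _ : Fin m => b) + x, ⟨w, hw, x, hx, rfl⟩, ?_⟩
      show _ = (w + (fun _ : Fin m => b) + x) + (fun _ : Fin m => (1 : ZMod 2))
      ext i
      simp
      ring
    · rintro ⟨u, ⟨w, hw, x, hx, rfl⟩, rfl⟩
      refine ⟨w, hw, x, hx, ?_⟩
      show ((w + (fun _ : Fin m => b) + x) + (fun _ : Fin m => (1 : ZMod 2))) = _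
      ext i
      simp
      ring
  | succ r ih =>
    intro b
    ext v
    simp only [Arec, Set.mem_setOf_eq]
    constructor
    · rintro ⟨w, ⟨c, hc, rfl⟩, x, hx, hv⟩
      refine ⟨fun i => BSadd m r (v i) (BSones m r),
        ⟨c + (fun _ : Fin m => b), ⟨c, hc, rfl⟩, x, hx, fun i hi => ?_⟩, ?_⟩
      · have h1 : v i ∈ Arec m d C r ((c + fun _ : Fin m => b) i + 1) := by
          have : (c + fun _ : Fin m => b + 1) i = (c + fun _ : Fin m => b) i + 1 := by
            simp [Pi.add_apply, add_assoc]
          rw [← this]; exact hv i hi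
        rw [ih ((c + fun _ : Fin m => b) i)] at h1
        obtain ⟨u, hu, huv⟩ := h1
        show BSadd m r (v i) (BSones m r) ∈ _
        rw [huv, BSadd_cancel]
        exact hu
      · funext i
        exact (BSadd_cancel m r (v i) (BSones m r)).symm
    · rintro ⟨u, ⟨w, ⟨c, hc, rfl⟩, x, hx, hu⟩, rfl⟩
      refine ⟨c + (fun _ : Fin m => b + 1), ⟨c, hc, rfl⟩, x, hx, fun i hi => ?_⟩
      have : (c + fun _ : Fin m => b + 1) i = (c + fun _ : Fin m => b) i + 1 := by
        simp [Pi.add_apply, add_assoc]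
      rw [this, ih ((c + fun _ : Fin m => b) i)]
      exact ⟨u i, hu i hi, rfl⟩

/-- For every `r ≥ 1`, the set `A₁^{(r)}` equals
`{ v ⊕ 1⃗ : v ∈ A₀^{(r)} }` (here `Arec m d C r b` plays the role of `A_b^{(r+1)}`). -/
theorem stmt1 (m d : ℕ) (hm : 1 ≤ m) (C : Set (Fin m → ZMod 2)) (r : ℕ) :
    Arec m d C r 1 = {v | ∃ u ∈ Arec m d C r 0, v = BSadd m r u (BSones m r)} := by
  have := key m d C r 0
  simpa using this
end

section
/- Suppose that for all w₁, w₂ ∈ C the Hamming distance between w₁ and w₂ ⊕ 1⃗ is at least 2d + 1. Then for every integer r ≥ 1, the recursively defined sets A₀^{(r)} and A₁^{(r)} are disjoint. (Disjointness of the neighborhoods of the recursively concatenated code.) -/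
lemma base_key (m d : ℕ) (w₁ w₂ x₁ x₂ : Fin m → ZMod 2)
    (hx₁ : hammingNorm x₁ ≤ d) (hx₂ : hammingNorm x₂ ≤ d)
    (heq : w₁ + (fun _ : Fin m => (0:ZMod 2)) + x₁ = w₂ + (fun _ : Fin m => (1:ZMod 2)) + x₂) :
    hammingDist w₁ (w₂ + fun _ => 1) ≤ 2 * d := by
  have h : hammingDist w₁ (w₂ + fun _ => 1) = hammingDist x₂ x₁ := by
    unfold hammingDist
    congr 1
    apply Finset.filter_congr
    intro i _
    have h2 := congrFun heq i
    simp only [Pi.add_apply] at h2 ⊢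
    constructor <;> intro h3 h4 <;> apply h3 <;>
      have : ∀ a b c e : ZMod 2, a + 0 + c = b + 1 + e → (a = b + 1 ↔ c = e) := by decide
    · exact ((this _ _ _ _ h2).2 h4.symm)
    · exact ((this _ _ _ _ h2).1 h4).symm
  calc hammingDist w₁ (w₂ + fun _ => 1) = hammingDist x₂ x₁ := h
    _ ≤ hammingDist x₂ 0 + hammingDist 0 x₁ := hammingDist_triangle _ _ _
    _ ≤ 2 * d := by
        rw [hammingDist_zero_right, hammingDist_comm, hammingDist_zero_right]; omega

/-- If every `w₁ ∈ C` is at Hamming distance at least `2d + 1` from the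
complement `w₂ ⊕ 1⃗` of every `w₂ ∈ C`, then for every `r ≥ 1` the sets `A₀^{(r)}` and
`A₁^{(r)}` are disjoint (here `Arec m d C r b` plays the role of `A_b^{(r+1)}`). -/
theorem stmt2 (m d : ℕ) (hm : 1 ≤ m) (C : Set (Fin m → ZMod 2))
    (hC : ∀ w₁ ∈ C, ∀ w₂ ∈ C, 2 * d + 1 ≤ hammingDist w₁ (w₂ + fun _ => 1)) (r : ℕ) :
    Disjoint (Arec m d C r 0) (Arec m d C r 1) := by
  induction r with
  | zero =>
    rw [Set.disjoint_left]
    rintro v ⟨w₁, hw₁, x₁, hx₁, rfl⟩ ⟨w₂, hw₂, x₂, hx₂, heq⟩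
    have := base_key m d w₁ w₂ x₁ x₂ hx₁ hx₂ heq
    have := hC w₁ hw₁ w₂ hw₂
    omega
  | succ r ih =>
    rw [Set.disjoint_left]
    rintro v ⟨w₁, ⟨c₁, hc₁, rfl⟩, x₁, hx₁, h₁⟩ ⟨w₂, ⟨c₂, hc₂, rfl⟩, x₂, hx₂, h₂⟩
    -- find i with c₁ i ≠ c₂ i + 1, x₁ i = 0, x₂ i = 0
    have hcard : ¬ (Finset.univ.filter fun i => c₁ i ≠ c₂ i + 1) ⊆
        ((Finset.univ.filter fun i => x₁ i ≠ 0) ∪ (Finset.univ.filter fun i => x₂ i ≠ 0)) := by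
      intro hsub
      have h1 := Finset.card_le_card hsub
      have h2 := Finset.card_union_le (Finset.univ.filter fun i => x₁ i ≠ 0)
        (Finset.univ.filter fun i => x₂ i ≠ (0:ZMod 2))
      have h3 := hC c₁ hc₁ c₂ hc₂
      unfold hammingDist at h3
      simp only [Pi.add_apply] at h3
      unfold hammingNorm at hx₁ hx₂
      omega
    rw [Finset.not_subset] at hcard
    obtain ⟨i, hi, hni⟩ := hcard
    simp only [Finset.mem_union, Finset.mem_filter, Finset.mem_univ, true_and,
      not_or, not_not] at hi hni
    obtain ⟨hx1i, hx2i⟩ := hni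
    have hv1 := h₁ i hx1i
    have hv2 := h₂ i hx2i
    simp only [Pi.add_apply] at hv1 hv2 hi
    have hne : c₁ i + 0 ≠ c₂ i + 1 := by simpa using hi
    have : (c₁ i + 0 = 0 ∧ c₂ i + 1 = 1) ∨ (c₁ i + 0 = 1 ∧ c₂ i + 1 = 0) := by
      revert hne; generalize c₁ i = a; generalize c₂ i = b; revert a b; decide
    rcases this with ⟨e1, e2⟩ | ⟨e1, e2⟩
    · rw [e1] at hv1; rw [e2] at hv2
      exact (Set.disjoint_left.mp ih hv1) hv2
    · rw [e1] at hv1; rw [e2] at hv2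
      exact (Set.disjoint_left.mp ih hv2) hv1
end

section
/- With p and Y as in the context, the expectation of Y under p equals minus the squared distance between the two unit vectors: ∑_{s ∈ ι} p(s) · Y(s) = −‖φ₁ − φ₀‖². -/
/-!
Multiplying by `p s = ‖φ₀ s‖²` clears the denominator of `Y s`:
`p s * Y s = 2 Re (conj (φ₀ s) * (φ₁ s - φ₀ s))`. Summing, the expectation is
`2 Re ⟪φ₀, φ₁ - φ₀⟫ = ‖φ₁‖² - ‖φ₀‖² - ‖φ₁ - φ₀‖²`, and the first two terms cancel for unit vectors.
-/

open ComplexConjugate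

theorem Complex.sq_norm_mul_div_re (z w : ℂ) : ‖z‖ ^ 2 * (w / z).re = (conj z * w).re := by
  rcases eq_or_ne z 0 with rfl | hz
  · simp
  · rw [← Complex.re_ofReal_mul, Complex.ofReal_pow, ← Complex.conj_mul', mul_assoc,
      mul_div_cancel₀ w hz]

theorem two_mul_re_inner_sub_self {𝕜 E : Type*} [RCLike 𝕜] [SeminormedAddCommGroup E]
    [InnerProductSpace 𝕜 E] (x y : E) :
    2 * RCLike.re (inner 𝕜 x (y - x)) = ‖y‖ ^ 2 - ‖x‖ ^ 2 - ‖y - x‖ ^ 2 := by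
  rw [inner_sub_right, map_sub, inner_self_eq_norm_sq, @norm_sub_sq 𝕜, inner_re_symm]
  ring

theorem EuclideanSpace.re_inner_eq_sum {ι : Type*} [Fintype ι] (x y : EuclideanSpace ℂ ι) :
    (inner ℂ x y).re = ∑ s, (conj (x s) * y s).re := by
  simp [PiLp.inner_apply, Complex.re_sum, mul_comm]

theorem stmt3_general {ι : Type*} [Fintype ι]
    (φ₀ φ₁ : EuclideanSpace ℂ ι) (h₀ : ‖φ₀‖ = 1) (h₁ : ‖φ₁‖ = 1)
    (p Y : ι → ℝ)
    (hp : ∀ s, p s = ‖φ₀ s‖ ^ 2)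
    (hY : ∀ s, Y s = 2 * ((φ₁ s - φ₀ s) / φ₀ s).re) :
    ∑ s, p s * Y s = -‖φ₁ - φ₀‖ ^ 2 := by
  calc ∑ s, p s * Y s = 2 * ∑ s, (conj (φ₀ s) * (φ₁ - φ₀) s).re := by
        rw [Finset.mul_sum]
        refine Finset.sum_congr rfl fun s _ => ?_
        rw [hp, hY, mul_left_comm, Complex.sq_norm_mul_div_re, PiLp.sub_apply]
    _ = ‖φ₁‖ ^ 2 - ‖φ₀‖ ^ 2 - ‖φ₁ - φ₀‖ ^ 2 := by
        rw [← EuclideanSpace.re_inner_eq_sum, ← two_mul_re_inner_sub_self (𝕜 := ℂ)]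
        rfl
    _ = -‖φ₁ - φ₀‖ ^ 2 := by rw [h₀, h₁]; ring

/-- With `p s = |⟨e_s, φ₀⟩|²` and
`Y s = 2·Re[(⟨e_s, φ₁⟩ − ⟨e_s, φ₀⟩)/⟨e_s, φ₀⟩]` (where `⟨e_s, φ⟩ = φ s` is the
coefficient of `φ` in the standard orthonormal basis of `ℂ^ι`), the expectation
of `Y` under `p` equals `−‖φ₁ − φ₀‖²`. -/
theorem stmt3 {ι : Type*} [Fintype ι] [Nonempty ι]
    (φ₀ φ₁ : EuclideanSpace ℂ ι) (h₀ : ‖φ₀‖ = 1) (h₁ : ‖φ₁‖ = 1)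
    (hne : ∀ s, φ₀ s ≠ 0)
    (p Y : ι → ℝ)
    (hp : ∀ s, p s = ‖φ₀ s‖ ^ 2)
    (hY : ∀ s, Y s = 2 * ((φ₁ s - φ₀ s) / φ₀ s).re) :
    ∑ s, p s * Y s = -‖φ₁ - φ₀‖ ^ 2 :=
  stmt3_general φ₀ φ₁ h₀ h₁ p Y hp hY
end

section
/- With p and Y as in the context, the second moment of Y under p is at most four times the squared distance between the two unit vectors: ∑_{s ∈ ι} p(s) · Y(s)² ≤ 4‖φ₁ − φ₀‖². -/
/-! Pointwise, `p s · Y s² = 4 ‖φ₀ s‖² (Re z)²` with `z = (φ₁ s − φ₀ s)/φ₀ s`, and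
`‖φ₀ s‖² (Re z)² ≤ ‖φ₀ s‖² ‖z‖² = ‖φ₁ s − φ₀ s‖²`; summing over `s` gives the squared
Euclidean distance. -/

theorem Complex.sq_norm_mul_sq_re_div_le (a w : ℂ) : ‖a‖ ^ 2 * (w / a).re ^ 2 ≤ ‖w‖ ^ 2 := by
  rcases eq_or_ne a 0 with rfl | ha
  · simp
  calc ‖a‖ ^ 2 * (w / a).re ^ 2 ≤ ‖a‖ ^ 2 * ‖w / a‖ ^ 2 := by
        gcongr ‖a‖ ^ 2 * ?_
        simpa only [sq_abs] using pow_le_pow_left₀ (abs_nonneg _) (abs_re_le_norm (w / a)) 2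
    _ = ‖w‖ ^ 2 := by
        rw [norm_div]
        field_simp

theorem stmt4_general {ι : Type*} [Fintype ι]
    (φ₀ φ₁ : EuclideanSpace ℂ ι)
    (p Y : ι → ℝ)
    (hp : ∀ s, p s = ‖φ₀ s‖ ^ 2)
    (hY : ∀ s, Y s = 2 * ((φ₁ s - φ₀ s) / φ₀ s).re) :
    ∑ s, p s * Y s ^ 2 ≤ 4 * ‖φ₁ - φ₀‖ ^ 2 := by
  rw [EuclideanSpace.norm_sq_eq, Finset.mul_sum]
  refine Finset.sum_le_sum fun s _ => ?_
  have hterm := Complex.sq_norm_mul_sq_re_div_le (φ₀ s) (φ₁ s - φ₀ s)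
  rw [hp, hY, PiLp.sub_apply]
  linarith

/-- With `p s = |⟨e_s, φ₀⟩|²` and
`Y s = 2·Re[(⟨e_s, φ₁⟩ − ⟨e_s, φ₀⟩)/⟨e_s, φ₀⟩]` (where `⟨e_s, φ⟩ = φ s` is the
coefficient of `φ` in the standard orthonormal basis of `ℂ^ι`), the second moment
of `Y` under `p` is at most `4‖φ₁ − φ₀‖²`. -/
theorem stmt4 {ι : Type*} [Fintype ι] [Nonempty ι]
    (φ₀ φ₁ : EuclideanSpace ℂ ι) (h₀ : ‖φ₀‖ = 1) (h₁ : ‖φ₁‖ = 1)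
    (hne : ∀ s, φ₀ s ≠ 0)
    (p Y : ι → ℝ)
    (hp : ∀ s, p s = ‖φ₀ s‖ ^ 2)
    (hY : ∀ s, Y s = 2 * ((φ₁ s - φ₀ s) / φ₀ s).re) :
    ∑ s, p s * Y s ^ 2 ≤ 4 * ‖φ₁ - φ₀‖ ^ 2 :=
  stmt4_general φ₀ φ₁ p Y hp hY
end

section
/- With p and Y as in the context, for every ε > 0 the probability under p that Y falls below −ε satisfies ∑_{s ∈ ι : Y(s) < −ε} p(s) ≤ 12‖φ₁ − φ₀‖² / ε². -/
/-! Where `Y s < -ε`, the bound `ε ≤ |Y s| ≤ 2 |φ₁ s - φ₀ s| / |φ₀ s|` gives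
`ε² p s ≤ 4 |φ₁ s - φ₀ s|²`; summing over `s` (Chebyshev) yields the bound with constant `4`. -/

open Finset

theorem Complex.abs_re_div_mul_norm_le (d w : ℂ) : |(d / w).re| * ‖w‖ ≤ ‖d‖ := by
  rcases eq_or_ne w 0 with rfl | hw
  · simp
  · calc |(d / w).re| * ‖w‖ ≤ ‖d / w‖ * ‖w‖ := by gcongr; exact Complex.abs_re_le_norm _
      _ = ‖d‖ := by rw [norm_div, div_mul_cancel₀ _ (norm_ne_zero_iff.mpr hw)]

theorem Complex.sq_mul_norm_sq_le_of_two_mul_re_div_lt (d w : ℂ) {ε : ℝ} (hε : 0 ≤ ε)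
    (h : 2 * (d / w).re < -ε) : ε ^ 2 * ‖w‖ ^ 2 ≤ 4 * ‖d‖ ^ 2 := by
  have hlin : ε * ‖w‖ ≤ 2 * ‖d‖ := calc
    ε * ‖w‖ ≤ 2 * (|(d / w).re| * ‖w‖) := by
      rw [← mul_assoc]; gcongr; linarith [neg_abs_le (d / w).re]
    _ ≤ 2 * ‖d‖ := by gcongr; exact abs_re_div_mul_norm_le d w
  nlinarith [mul_le_mul hlin hlin (by positivity) (by positivity)]

theorem Finset.sum_filter_le_sum_div_sq {ι : Type*} (s : Finset ι) (P : ι → Prop)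
    [DecidablePred P] (p g : ι → ℝ) (hg : ∀ i ∈ s, 0 ≤ g i) {ε : ℝ} (hε : 0 < ε)
    (h : ∀ i ∈ s, P i → ε ^ 2 * p i ≤ g i) :
    ∑ i ∈ s.filter P, p i ≤ (∑ i ∈ s, g i) / ε ^ 2 := by
  rw [le_div_iff₀ (by positivity), sum_mul]
  calc ∑ i ∈ s.filter P, p i * ε ^ 2 ≤ ∑ i ∈ s.filter P, g i :=
        sum_le_sum fun i hi => by
          rw [mem_filter] at hi; linarith [h i hi.1 hi.2]
    _ ≤ ∑ i ∈ s, g i := sum_le_sum_of_subset_of_nonneg (filter_subset _ _) fun i hi _ => hg i hi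

theorem stmt5_general {ι : Type*} [Fintype ι]
    (φ₀ φ₁ : EuclideanSpace ℂ ι)
    (p Y : ι → ℝ)
    (hp : ∀ s, p s = ‖φ₀ s‖ ^ 2)
    (hY : ∀ s, Y s = 2 * ((φ₁ s - φ₀ s) / φ₀ s).re)
    (ε : ℝ) (hε : 0 < ε) :
    ∑ s ∈ Finset.univ.filter (fun s => Y s < -ε), p s
      ≤ 12 * ‖φ₁ - φ₀‖ ^ 2 / ε ^ 2 := by
  have hnorm : ‖φ₁ - φ₀‖ ^ 2 = ∑ s, ‖φ₁ s - φ₀ s‖ ^ 2 := by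
    simp [EuclideanSpace.norm_sq_eq]
  calc ∑ s ∈ univ.filter (fun s => Y s < -ε), p s
      ≤ (∑ s, 4 * ‖φ₁ s - φ₀ s‖ ^ 2) / ε ^ 2 :=
        sum_filter_le_sum_div_sq _ _ _ _ (fun _ _ => by positivity) hε fun s _ hs => by
          rw [hp]
          exact Complex.sq_mul_norm_sq_le_of_two_mul_re_div_lt _ _ hε.le (hY s ▸ hs)
    _ = 4 * ‖φ₁ - φ₀‖ ^ 2 / ε ^ 2 := by rw [hnorm, mul_sum]
    _ ≤ 12 * ‖φ₁ - φ₀‖ ^ 2 / ε ^ 2 := by gcongr; norm_num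

/-- With `p s = |⟨e_s, φ₀⟩|²` and
`Y s = 2·Re[(⟨e_s, φ₁⟩ − ⟨e_s, φ₀⟩)/⟨e_s, φ₀⟩]` (where `⟨e_s, φ⟩ = φ s` is the
coefficient of `φ` in the standard orthonormal basis of `ℂ^ι`), for every `ε > 0`
the probability under `p` that `Y < −ε` is at most `12‖φ₁ − φ₀‖²/ε²`. -/
theorem stmt5 {ι : Type*} [Fintype ι] [Nonempty ι]
    (φ₀ φ₁ : EuclideanSpace ℂ ι) (h₀ : ‖φ₀‖ = 1) (h₁ : ‖φ₁‖ = 1)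
    (hne : ∀ s, φ₀ s ≠ 0)
    (p Y : ι → ℝ)
    (hp : ∀ s, p s = ‖φ₀ s‖ ^ 2)
    (hY : ∀ s, Y s = 2 * ((φ₁ s - φ₀ s) / φ₀ s).re)
    (ε : ℝ) (hε : 0 < ε) :
    ∑ s ∈ Finset.univ.filter (fun s => Y s < -ε), p s
      ≤ 12 * ‖φ₁ - φ₀‖ ^ 2 / ε ^ 2 :=
  stmt5_general φ₀ φ₁ p Y hp hY ε hε
end

section
/- With p and Y as in the context, for every ε with 0 < ε ≤ 1/2 one has ∑_{s ∈ ι : Y(s) ≥ −ε} p(s) · (ln(1 + Y(s)))² ≤ 8‖φ₁ − φ₀‖². -/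
lemma logsq_le_aux (x : ℝ) (hx : -(1/2 : ℝ) ≤ x) :
    (Real.log (1 + x)) ^ 2 ≤ 2 * x ^ 2 := by
  rcases le_or_gt 0 x with h | h
  · have h1 : Real.log (1 + x) ≤ x := by
      have := Real.log_le_sub_one_of_pos (x := 1 + x) (by linarith)
      linarith
    have h2 : 0 ≤ Real.log (1 + x) := Real.log_nonneg (by linarith)
    nlinarith
  · have hconc := (strictConcaveOn_log_Ioi).concaveOn
    have ha : (0:ℝ) ≤ -2*x := by linarith
    have hb : (0:ℝ) ≤ 1 + 2*x := by linarith
    have hmem1 : (1/2 : ℝ) ∈ Set.Ioi (0:ℝ) := by norm_num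
    have hmem2 : (1 : ℝ) ∈ Set.Ioi (0:ℝ) := by norm_num
    have hc := hconc.2 hmem1 hmem2 ha hb (by ring)
    simp only [smul_eq_mul, Real.log_one, mul_zero, add_zero] at hc
    have heq : (-2*x) * (1/2 : ℝ) + (1+2*x) * 1 = 1 + x := by ring
    rw [heq] at hc
    have hlog2 : Real.log (1/2 : ℝ) = -Real.log 2 := by
      rw [one_div, Real.log_inv]
    rw [hlog2] at hc
    have h2 : Real.log (1 + x) ≤ 0 := Real.log_nonpos (by linarith) (by linarith)
    have hl2 : Real.log 2 < 0.6931471808 := Real.log_two_lt_d9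
    have hl2' : 0 < Real.log 2 := Real.log_pos (by norm_num)
    have h3 : -Real.log (1 + x) ≤ -2*x*Real.log 2 := by nlinarith
    have h4 : (-Real.log (1 + x))^2 ≤ (-2*x*Real.log 2)^2 :=
      pow_le_pow_left₀ (by linarith) h3 2
    have h5 : Real.log 2 ^ 2 ≤ 1/2 := by nlinarith
    nlinarith [sq_nonneg x]

/-- With `p s = |⟨e_s, φ₀⟩|²` and
`Y s = 2·Re[(⟨e_s, φ₁⟩ − ⟨e_s, φ₀⟩)/⟨e_s, φ₀⟩]` (where `⟨e_s, φ⟩ = φ s` is the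
coefficient of `φ` in the standard orthonormal basis of `ℂ^ι`), for every `ε` with
`0 < ε ≤ 1/2` one has `∑_{s : Y s ≥ −ε} p s · (ln(1 + Y s))² ≤ 8‖φ₁ − φ₀‖²`. -/
theorem stmt6 {ι : Type*} [Fintype ι] [Nonempty ι]
    (φ₀ φ₁ : EuclideanSpace ℂ ι) (h₀ : ‖φ₀‖ = 1) (h₁ : ‖φ₁‖ = 1)
    (hne : ∀ s, φ₀ s ≠ 0)
    (p Y : ι → ℝ)
    (hp : ∀ s, p s = ‖φ₀ s‖ ^ 2)
    (hY : ∀ s, Y s = 2 * ((φ₁ s - φ₀ s) / φ₀ s).re)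
    (ε : ℝ) (hε : 0 < ε) (hε' : ε ≤ 1/2) :
    ∑ s ∈ Finset.univ.filter (fun s => -ε ≤ Y s), p s * (Real.log (1 + Y s)) ^ 2
      ≤ 8 * ‖φ₁ - φ₀‖ ^ 2 := by
  have key : ∀ s ∈ Finset.univ.filter (fun s => -ε ≤ Y s),
      p s * (Real.log (1 + Y s)) ^ 2 ≤ 8 * ‖φ₁ s - φ₀ s‖ ^ 2 := by
    intro s hs
    rw [Finset.mem_filter] at hs
    have hYs : -(1/2 : ℝ) ≤ Y s := by linarith [hs.2]
    have hlog := logsq_le_aux (Y s) hYs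
    have hw : (0:ℝ) < ‖φ₀ s‖ := norm_pos_iff.mpr (hne s)
    have hre : |((φ₁ s - φ₀ s) / φ₀ s).re| ≤ ‖φ₁ s - φ₀ s‖ / ‖φ₀ s‖ := by
      calc |((φ₁ s - φ₀ s) / φ₀ s).re| ≤ ‖(φ₁ s - φ₀ s) / φ₀ s‖ :=
            Complex.abs_re_le_norm _
        _ = ‖φ₁ s - φ₀ s‖ / ‖φ₀ s‖ := by rw [norm_div]
    have hd : (0:ℝ) ≤ ‖φ₁ s - φ₀ s‖ := norm_nonneg _
    have hY2 : (Y s)^2 * ‖φ₀ s‖^2 ≤ 4 * ‖φ₁ s - φ₀ s‖^2 := by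
      rw [hY s]
      have h1 : |((φ₁ s - φ₀ s) / φ₀ s).re| * ‖φ₀ s‖ ≤ ‖φ₁ s - φ₀ s‖ := by
        rw [← le_div_iff₀ hw]; exact hre
      have h2 : (|((φ₁ s - φ₀ s) / φ₀ s).re| * ‖φ₀ s‖)^2 ≤ ‖φ₁ s - φ₀ s‖^2 :=
        pow_le_pow_left₀ (by positivity) h1 2
      nlinarith [sq_abs (((φ₁ s - φ₀ s) / φ₀ s).re)]
    have hp' := hp s
    have hpn : 0 ≤ p s := by rw [hp']; positivity
    calc p s * (Real.log (1 + Y s))^2 ≤ p s * (2 * (Y s)^2) := by nlinarith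
      _ ≤ 8 * ‖φ₁ s - φ₀ s‖^2 := by rw [hp']; nlinarith
  calc ∑ s ∈ Finset.univ.filter (fun s => -ε ≤ Y s), p s * (Real.log (1 + Y s)) ^ 2
      ≤ ∑ s ∈ Finset.univ.filter (fun s => -ε ≤ Y s), 8 * ‖φ₁ s - φ₀ s‖ ^ 2 :=
        Finset.sum_le_sum key
    _ ≤ ∑ s, 8 * ‖φ₁ s - φ₀ s‖ ^ 2 :=
        Finset.sum_le_sum_of_subset_of_nonneg (Finset.filter_subset _ _)
          (by intros; positivity)
    _ = 8 * ∑ s, ‖φ₁ s - φ₀ s‖ ^ 2 := by rw [Finset.mul_sum]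
    _ = 8 * ‖φ₁ - φ₀‖ ^ 2 := by
        congr 1
        have h := EuclideanSpace.norm_eq (φ₁ - φ₀)
        rw [h, Real.sq_sqrt (by positivity)]
        refine Finset.sum_congr rfl fun s _ => ?_
        simp
end

section
/- Let n ≥ 1, let q > 0 and λ ∈ [0,1] be real numbers, and let Ω be a set of length-n bitstrings such that any two distinct elements of Ω have Hamming distance at least q·n. Let D be any probability mass function on length-n bitstrings, and let ã be obtained by sampling a ∼ D and then independently flipping each bit of a with probability λ/2. Then the probability that ã ∈ Ω is at most (1 − λ/2)^n + |Ω| · 2^{−qn/2}. -/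
/-- Let `Ω` be a set of length-`n` bitstrings any two distinct elements
of which are at Hamming distance at least `q·n`. If `a` is drawn from a distribution
`D` on bitstrings and `ã` is obtained from `a` by independently flipping each bit
with probability `lam/2`, then `Pr[ã ∈ Ω] ≤ (1 − lam/2)^n + |Ω| · 2^{−qn/2}`. -/
theorem stmt8 (n : ℕ) (hn : 1 ≤ n) (q : ℝ) (hq : 0 < q)
    (lam : ℝ) (hlam0 : 0 ≤ lam) (hlam1 : lam ≤ 1)
    (Ω : Finset (Fin n → Bool))
    (hΩ : ∀ x ∈ Ω, ∀ y ∈ Ω, x ≠ y → q * (n : ℝ) ≤ (hammingDist x y : ℝ))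
    (D : (Fin n → Bool) → ℝ) (hD0 : ∀ a, 0 ≤ D a) (hD1 : ∑ a, D a = 1) :
    ∑ a, D a * ∑ b ∈ Ω, ∏ i, (if b i = a i then 1 - lam/2 else lam/2)
      ≤ (1 - lam/2) ^ n + (Ω.card : ℝ) * (2 : ℝ) ^ (-(q * (n : ℝ)) / 2) := by
  classical
  set B : ℝ := (1 - lam/2) ^ n + (Ω.card : ℝ) * (2 : ℝ) ^ (-(q * (n : ℝ)) / 2) with hB
  have hpow1 : (0:ℝ) ≤ (1 - lam/2) ^ n := pow_nonneg (by linarith) n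
  have hrpow : (0:ℝ) ≤ (2 : ℝ) ^ (-(q * (n : ℝ)) / 2) := Real.rpow_nonneg (by norm_num) _
  have key : ∀ a : Fin n → Bool,
      ∑ b ∈ Ω, ∏ i, (if b i = a i then 1 - lam/2 else lam/2) ≤ B := by
    intro a
    set p : (Fin n → Bool) → Prop := fun b => (hammingDist b a : ℝ) < q * n / 2 with hp
    have hcard1 : (Ω.filter p).card ≤ 1 := by
      rw [Finset.card_le_one]
      intro b hb b' hb'
      by_contra hne
      have hd := hΩ b (Finset.mem_filter.mp hb).1 b' (Finset.mem_filter.mp hb').1 hne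
      have h1 : (hammingDist b a : ℝ) < q * n / 2 := (Finset.mem_filter.mp hb).2
      have h2 : (hammingDist b' a : ℝ) < q * n / 2 := (Finset.mem_filter.mp hb').2
      have htri : hammingDist b b' ≤ hammingDist b a + hammingDist a b' :=
        hammingDist_triangle b a b'
      rw [hammingDist_comm a b'] at htri
      have : (hammingDist b b' : ℝ) ≤ (hammingDist b a : ℝ) + (hammingDist b' a : ℝ) := by
        exact_mod_cast htri
      linarith
    have hterm1 : ∀ b ∈ Ω.filter p,
        ∏ i, (if b i = a i then 1 - lam/2 else lam/2) ≤ (1 - lam/2) ^ n := by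
      intro b _
      calc ∏ i, (if b i = a i then 1 - lam/2 else lam/2)
          ≤ ∏ _i : Fin n, (1 - lam/2) := by
            apply Finset.prod_le_prod
            · intro i _; split <;> linarith
            · intro i _; split <;> linarith
        _ = (1 - lam/2) ^ n := by simp
    have hterm2 : ∀ b ∈ Ω.filter (fun b => ¬ p b),
        ∏ i, (if b i = a i then 1 - lam/2 else lam/2) ≤ (2 : ℝ) ^ (-(q * (n : ℝ)) / 2) := by
      intro b hb
      have hd : q * n / 2 ≤ (hammingDist b a : ℝ) := le_of_not_gt (Finset.mem_filter.mp hb).2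
      have step1 : ∏ i, (if b i = a i then 1 - lam/2 else lam/2)
          ≤ ∏ i, (if b i = a i then (1:ℝ) else 1/2) := by
        apply Finset.prod_le_prod
        · intro i _; split <;> linarith
        · intro i _; split <;> linarith
      have step2 : ∏ i, (if b i = a i then (1:ℝ) else 1/2)
          = ((1:ℝ)/2) ^ (hammingDist b a) := by
        rw [Finset.prod_ite, Finset.prod_const, Finset.prod_const, one_pow, one_mul]
        simp [hammingDist, Finset.filter_congr_decidable]
      have step3 : ((1:ℝ)/2) ^ (hammingDist b a) = (2:ℝ) ^ (-(hammingDist b a : ℝ)) := by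
        rw [Real.rpow_neg (by norm_num), Real.rpow_natCast]
        rw [one_div, inv_pow]
      have step4 : (2:ℝ) ^ (-(hammingDist b a : ℝ)) ≤ (2 : ℝ) ^ (-(q * (n : ℝ)) / 2) := by
        apply Real.rpow_le_rpow_of_exponent_le (by norm_num)
        linarith
      calc ∏ i, (if b i = a i then 1 - lam/2 else lam/2)
          ≤ ((1:ℝ)/2) ^ (hammingDist b a) := step2 ▸ step1
        _ = (2:ℝ) ^ (-(hammingDist b a : ℝ)) := step3
        _ ≤ (2 : ℝ) ^ (-(q * (n : ℝ)) / 2) := step4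
    have h1 : ∑ b ∈ Ω.filter p, ∏ i, (if b i = a i then 1 - lam/2 else lam/2)
        ≤ (1 - lam/2) ^ n := by
      calc ∑ b ∈ Ω.filter p, ∏ i, (if b i = a i then 1 - lam/2 else lam/2)
          ≤ (Ω.filter p).card • ((1 - lam/2) ^ n) := Finset.sum_le_card_nsmul _ _ _ hterm1
        _ = ((Ω.filter p).card : ℝ) * ((1 - lam/2) ^ n) := by rw [nsmul_eq_mul]
        _ ≤ 1 * ((1 - lam/2) ^ n) := by
            apply mul_le_mul_of_nonneg_right _ hpow1
            exact_mod_cast hcard1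
        _ = (1 - lam/2) ^ n := one_mul _
    have h2 : ∑ b ∈ Ω.filter (fun b => ¬ p b), ∏ i, (if b i = a i then 1 - lam/2 else lam/2)
        ≤ (Ω.card : ℝ) * (2 : ℝ) ^ (-(q * (n : ℝ)) / 2) := by
      calc ∑ b ∈ Ω.filter (fun b => ¬ p b), ∏ i, (if b i = a i then 1 - lam/2 else lam/2)
          ≤ (Ω.filter (fun b => ¬ p b)).card • ((2 : ℝ) ^ (-(q * (n : ℝ)) / 2)) :=
            Finset.sum_le_card_nsmul _ _ _ hterm2
        _ = ((Ω.filter (fun b => ¬ p b)).card : ℝ) * ((2 : ℝ) ^ (-(q * (n : ℝ)) / 2)) := by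
            rw [nsmul_eq_mul]
        _ ≤ (Ω.card : ℝ) * (2 : ℝ) ^ (-(q * (n : ℝ)) / 2) := by
            apply mul_le_mul_of_nonneg_right _ hrpow
            exact_mod_cast Finset.card_filter_le _ _
    calc ∑ b ∈ Ω, ∏ i, (if b i = a i then 1 - lam/2 else lam/2)
        = (∑ b ∈ Ω.filter p, ∏ i, (if b i = a i then 1 - lam/2 else lam/2))
          + ∑ b ∈ Ω.filter (fun b => ¬ p b), ∏ i, (if b i = a i then 1 - lam/2 else lam/2) :=
          (Finset.sum_filter_add_sum_filter_not _ _ _).symm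
      _ ≤ B := by rw [hB]; exact add_le_add h1 h2
  calc ∑ a, D a * ∑ b ∈ Ω, ∏ i, (if b i = a i then 1 - lam/2 else lam/2)
      ≤ ∑ a : Fin n → Bool, D a * B := by
        apply Finset.sum_le_sum
        intro a _
        exact mul_le_mul_of_nonneg_left (key a) (hD0 a)
    _ = B := by rw [← Finset.sum_mul, hD1, one_mul]
end

section
/- Let M, S be positive integers with S ≤ 2^{M−1} and let δ ∈ (0,1]. Let Ω be a uniformly random subset of {0,1}^M of cardinality S. Then the probability that there exist distinct x, y ∈ Ω whose Hamming distance is at most (M/2)·(1 − √(2·log₂(S²/δ)/M)) is at most δ. -/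
/-!
Union bound over ordered pairs. A fixed pair of distinct points lies in a random `S`-subset of an
`N`-set with probability `S(S-1)/(N(N-1)) ≤ S²/N²`, and by a Chernoff bound (exponential tilt
`2ε`, then `cosh ε ≤ exp(ε²/2)`) each Hamming ball of radius `(M/2)(1-ε)` in `{0,1}^M` has at
most `2^M exp(-Mε²/2)` points. With `N = 2^M` the bad probability is at most
`S² exp(-Mε²/2)`, and the choice of `ε` makes `Mε²/2 = log₂(S²/δ) ≥ ln(S²/δ)`.
-/

open Finset Real

section Hamming

variable {ι β : Type*} [Fintype ι] [DecidableEq ι] [Fintype β] [DecidableEq β]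

theorem sum_pow_hammingDist (x : ι → β) (r : ℝ) :
    ∑ y : ι → β, r ^ hammingDist x y = (1 + (Fintype.card β - 1) * r) ^ Fintype.card ι := by
  have h_prod (y : ι → β) : r ^ hammingDist x y = ∏ i, if x i ≠ y i then r else 1 := by
    rw [hammingDist, prod_ite, prod_const, prod_const, one_pow, mul_one]
  have h_coord (i : ι) : ∑ b : β, (if x i ≠ b then r else 1) = 1 + (Fintype.card β - 1) * r := by
    have h_split (b : β) : (if x i ≠ b then r else 1) = r + if x i = b then 1 - r else 0 := by
      split_ifs <;> simp_all
    simp only [h_split, sum_add_distrib, sum_const, sum_ite_eq, mem_univ, if_true, card_univ,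
      nsmul_eq_mul]
    ring
  simp_rw [h_prod]
  rw [← Fintype.prod_sum fun i b => if x i ≠ b then r else 1]
  simp_rw [h_coord, prod_const, card_univ]

theorem card_filter_hammingDist_le_le_exp (x : ι → β) {t : ℝ} (ht : 0 ≤ t) (d : ℝ) :
    (#{y | (hammingDist x y : ℝ) ≤ d} : ℝ)
      ≤ exp (t * d) * (1 + (Fintype.card β - 1) * exp (-t)) ^ Fintype.card ι := by
  calc (#{y | (hammingDist x y : ℝ) ≤ d} : ℝ)
      = ∑ y with (hammingDist x y : ℝ) ≤ d, (1 : ℝ) := by simp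
    _ ≤ ∑ y with (hammingDist x y : ℝ) ≤ d, exp (t * (d - hammingDist x y)) :=
        sum_le_sum fun y hy => one_le_exp (mul_nonneg ht (by linarith [(mem_filter.1 hy).2]))
    _ ≤ ∑ y, exp (t * (d - hammingDist x y)) :=
        sum_le_sum_of_subset_of_nonneg (filter_subset _ _) fun y _ _ => (exp_pos _).le
    _ = exp (t * d) * ∑ y, exp (-t) ^ hammingDist x y := by
        rw [mul_sum]
        congr! 1 with y
        rw [← exp_nat_mul, ← exp_add]
        ring_nf
    _ = _ := by rw [sum_pow_hammingDist]

end Hamming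

theorem exp_mul_one_sub_mul_one_add_exp_le {ε : ℝ} :
    exp (ε * (1 - ε)) * (1 + exp (-(2 * ε))) ≤ 2 * exp (-(ε ^ 2 / 2)) := by
  have h_cosh : exp (ε * (1 - ε)) * (1 + exp (-(2 * ε))) = 2 * exp (-ε ^ 2) * cosh ε := by
    have h_pos : exp (ε * (1 - ε)) = exp (-ε ^ 2) * exp ε := by rw [← exp_add]; ring_nf
    have h_neg : exp (ε * (1 - ε)) * exp (-(2 * ε)) = exp (-ε ^ 2) * exp (-ε) := by
      rw [← exp_add, ← exp_add]; ring_nf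
    rw [cosh_eq]
    linear_combination h_pos + h_neg
  calc exp (ε * (1 - ε)) * (1 + exp (-(2 * ε))) = 2 * exp (-ε ^ 2) * cosh ε := h_cosh
    _ ≤ 2 * exp (-ε ^ 2) * exp (ε ^ 2 / 2) := by gcongr; exact cosh_le_exp_half_sq ε
    _ = 2 * exp (-(ε ^ 2 / 2)) := by rw [mul_assoc, ← exp_add]; ring_nf

theorem card_hammingBall_le {ι : Type*} [Fintype ι] [DecidableEq ι] (x : ι → Bool) {ε : ℝ}
    (hε : 0 ≤ ε) :
    (#{y | (hammingDist x y : ℝ) ≤ Fintype.card ι / 2 * (1 - ε)} : ℝ)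
      ≤ 2 ^ Fintype.card ι * exp (-(Fintype.card ι * ε ^ 2 / 2)) := by
  set n := Fintype.card ι
  calc (#{y | (hammingDist x y : ℝ) ≤ n / 2 * (1 - ε)} : ℝ)
      ≤ exp (2 * ε * (n / 2 * (1 - ε))) * (1 + (Fintype.card Bool - 1) * exp (-(2 * ε))) ^ n :=
        card_filter_hammingDist_le_le_exp x (by positivity) _
    _ = (exp (ε * (1 - ε)) * (1 + exp (-(2 * ε)))) ^ n := by
        rw [mul_pow, ← exp_nat_mul, Fintype.card_bool]
        ring_nf
    _ ≤ (2 * exp (-(ε ^ 2 / 2))) ^ n := by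
        gcongr ?_ ^ _
        exact exp_mul_one_sub_mul_one_add_exp_le
    _ = 2 ^ n * exp (-(n * ε ^ 2 / 2)) := by
        rw [mul_pow, ← exp_nat_mul]
        ring_nf

theorem exp_neg_logb_two_le_inv {a : ℝ} (ha : 1 ≤ a) : exp (-logb 2 a) ≤ a⁻¹ := by
  have h_log_le : log a ≤ logb 2 a :=
    le_div_self (log_nonneg ha) (log_pos one_lt_two) (by linarith [log_le_sub_one_of_pos two_pos])
  calc exp (-logb 2 a) ≤ exp (-log a) := by gcongr
    _ = a⁻¹ := by rw [exp_neg, exp_log (by positivity)]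

theorem Nat.choose_sub_two_mul_sq_le {n k : ℕ} (hk : 2 ≤ k) (hkn : k ≤ n) :
    (n - 2).choose (k - 2) * n ^ 2 ≤ n.choose k * k ^ 2 := by
  have h_pairs : (n.choose k * k.choose 2 : ℝ) = n.choose 2 * (n - 2).choose (k - 2) := by
    exact_mod_cast Nat.choose_mul hk
  rw [Nat.cast_choose_two, Nat.cast_choose_two] at h_pairs
  have hk' : (2 : ℝ) ≤ k := by exact_mod_cast hk
  have hkn' : (k : ℝ) ≤ n := by exact_mod_cast hkn
  have hA : (0 : ℝ) ≤ n.choose k := by positivity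
  suffices ((n - 2).choose (k - 2) * n ^ 2 : ℝ) ≤ n.choose k * k ^ 2 by exact_mod_cast this
  nlinarith [mul_nonneg (mul_nonneg hA (by linarith : (0 : ℝ) ≤ k)) (sub_nonneg.2 hkn')]

section RandomSubset

variable {α : Type*} [Fintype α] [DecidableEq α]

theorem card_filter_exists_pair_le {S : ℕ} (hS : 2 ≤ S) (R : α → α → Prop) [DecidableRel R] :
    #{Ω ∈ (univ : Finset α).powersetCard S | ∃ x ∈ Ω, ∃ y ∈ Ω, x ≠ y ∧ R x y}
      ≤ ∑ x, #{y | x ≠ y ∧ R x y} * (Fintype.card α - 2).choose (S - 2) := by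
  let containing (x y : α) := {Ω ∈ (univ : Finset α).powersetCard S | {x, y} ⊆ Ω}
  have h_cover : {Ω ∈ (univ : Finset α).powersetCard S | ∃ x ∈ Ω, ∃ y ∈ Ω, x ≠ y ∧ R x y}
      ⊆ univ.biUnion fun x => ({y | x ≠ y ∧ R x y} : Finset α).biUnion (containing x) := by
    intro Ω hΩ
    obtain ⟨hΩS, x, hx, y, hy, hxy, hR⟩ := mem_filter.1 hΩ
    simp only [mem_biUnion, mem_univ, mem_filter, true_and, containing]
    exact ⟨x, y, ⟨hxy, hR⟩, hΩS, insert_subset hx (singleton_subset_iff.2 hy)⟩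
  have h_card (x y : α) (hxy : x ≠ y) :
      #(containing x y) = (Fintype.card α - 2).choose (S - 2) := by
    rw [card_filter_powersetCard_subset _ _ _ (subset_univ _) (by rwa [card_pair hxy]),
      card_pair hxy, card_univ]
  calc _ ≤ _ := card_le_card h_cover
    _ ≤ ∑ x, #(({y | x ≠ y ∧ R x y} : Finset α).biUnion (containing x)) := card_biUnion_le
    _ ≤ _ := sum_le_sum fun x _ => card_biUnion_le_card_mul _ _ _
        fun y hy => (h_card x y (mem_filter.1 hy).2.1).le

theorem card_filter_exists_pair_div_le {S : ℕ} (hS : 2 ≤ S) (hSα : S ≤ Fintype.card α)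
    (R : α → α → Prop) [DecidableRel R] {b : ℝ} (hb : ∀ x, (#{y | R x y} : ℝ) ≤ b) :
    (#{Ω ∈ (univ : Finset α).powersetCard S | ∃ x ∈ Ω, ∃ y ∈ Ω, x ≠ y ∧ R x y} : ℝ)
        / #((univ : Finset α).powersetCard S)
      ≤ S ^ 2 * b / Fintype.card α := by
  set N := Fintype.card α
  set C := (N - 2).choose (S - 2)
  have hN : 0 < N := by omega
  have hb0 : 0 ≤ b :=
    (Nat.cast_nonneg _).trans (hb (Classical.choice (Fintype.card_pos_iff.1 hN)))
  have h_bad : (#{Ω ∈ (univ : Finset α).powersetCard S | ∃ x ∈ Ω, ∃ y ∈ Ω, x ≠ y ∧ R x y} : ℝ)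
      ≤ N * b * C := by
    calc _ ≤ ((∑ x, #{y | x ≠ y ∧ R x y} * C : ℕ) : ℝ) := by
          exact_mod_cast card_filter_exists_pair_le hS R
      _ ≤ ∑ _x : α, b * C := by
          push_cast
          gcongr with x
          refine le_trans ?_ (hb x)
          exact_mod_cast card_le_card fun y hy => by
            simp only [mem_filter] at hy ⊢
            exact ⟨hy.1, hy.2.2⟩
      _ = N * b * C := by rw [sum_const, card_univ, nsmul_eq_mul, mul_assoc]
  have h_choose : (C * N ^ 2 : ℝ) ≤ N.choose S * S ^ 2 := by
    exact_mod_cast Nat.choose_sub_two_mul_sq_le hS hSα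
  rw [card_powersetCard, card_univ,
    div_le_div_iff₀ (by exact_mod_cast Nat.choose_pos hSα) (by exact_mod_cast hN)]
  calc _ ≤ N * b * C * N := by gcongr
    _ = b * (C * N ^ 2) := by ring
    _ ≤ b * (N.choose S * S ^ 2) := by gcongr
    _ = _ := by ring

end RandomSubset

open Classical in
theorem stmt9_general (M S : ℕ) (hM : 0 < M) (hS2 : S ≤ 2 ^ (M - 1))
    (δ : ℝ) (hδ : 0 < δ) (hδ1 : δ ≤ 1) :
    ((Finset.filter
        (fun Ω : Finset (Fin M → Bool) => ∃ x ∈ Ω, ∃ y ∈ Ω, x ≠ y ∧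
          (hammingDist x y : ℝ) ≤
            ((M : ℝ) / 2) * (1 - Real.sqrt (2 * Real.logb 2 ((S : ℝ) ^ 2 / δ) / M)))
        ((Finset.univ : Finset (Fin M → Bool)).powersetCard S)).card : ℝ)
      / (((Finset.univ : Finset (Fin M → Bool)).powersetCard S).card : ℝ) ≤ δ := by
  rcases lt_or_ge S 2 with hS | hS
  · rw [filter_false_of_mem fun Ω hΩ h_pair => ?_, card_empty, Nat.cast_zero, zero_div]
    · exact hδ.le
    · rw [mem_powersetCard_univ] at hΩ
      obtain ⟨x, hx, y, hy, hxy, -⟩ := h_pair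
      exact absurd (one_lt_card.2 ⟨x, hx, y, hy, hxy⟩) (by omega)
  set L := logb 2 ((S : ℝ) ^ 2 / δ)
  have h_ratio : 1 ≤ (S : ℝ) ^ 2 / δ := by
    rw [le_div_iff₀ hδ, one_mul]
    nlinarith [(show (2 : ℝ) ≤ S by exact_mod_cast hS)]
  have hL : (M : ℝ) * √(2 * L / M) ^ 2 / 2 = L := by
    have hL0 : 0 ≤ L := logb_nonneg one_lt_two h_ratio
    rw [sq_sqrt (by positivity)]
    field_simp
  have h_ball (x : Fin M → Bool) :
      (#{y | (hammingDist x y : ℝ) ≤ M / 2 * (1 - √(2 * L / M))} : ℝ) ≤ 2 ^ M * (δ / S ^ 2) := by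
    calc _ ≤ 2 ^ M * exp (-(M * √(2 * L / M) ^ 2 / 2)) := by
          simpa using card_hammingBall_le x (sqrt_nonneg (2 * L / M))
      _ ≤ 2 ^ M * ((S : ℝ) ^ 2 / δ)⁻¹ := by rw [hL]; gcongr; exact exp_neg_logb_two_le_inv h_ratio
      _ = 2 ^ M * (δ / S ^ 2) := by rw [inv_div]
  have hS_card : S ≤ Fintype.card (Fin M → Bool) := by
    simpa using hS2.trans (Nat.pow_le_pow_right two_pos (Nat.sub_le M 1))
  calc _ ≤ S ^ 2 * (2 ^ M * (δ / S ^ 2)) / Fintype.card (Fin M → Bool) := by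
        convert card_filter_exists_pair_div_le hS hS_card _ h_ball
    _ = δ := by
        simp only [Fintype.card_fun, Fintype.card_bool, Fintype.card_fin, Nat.cast_pow,
          Nat.cast_ofNat]
        field_simp

open Classical in
/-- Gilbert–Varshamov-style bound: for a uniformly random subset `Ω` of
`{0,1}^M` of cardinality `S ≤ 2^{M−1}`, the probability that some pair of distinct
elements of `Ω` is within Hamming distance `(M/2)·(1 − √(2·log₂(S²/δ)/M))` is at
most `δ`. -/
theorem stmt9 (M S : ℕ) (hM : 0 < M) (hS : 0 < S) (hS2 : S ≤ 2 ^ (M - 1))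
    (δ : ℝ) (hδ : 0 < δ) (hδ1 : δ ≤ 1) :
    ((Finset.filter
        (fun Ω : Finset (Fin M → Bool) => ∃ x ∈ Ω, ∃ y ∈ Ω, x ≠ y ∧
          (hammingDist x y : ℝ) ≤
            ((M : ℝ) / 2) * (1 - Real.sqrt (2 * Real.logb 2 ((S : ℝ) ^ 2 / δ) / M)))
        ((Finset.univ : Finset (Fin M → Bool)).powersetCard S)).card : ℝ)
      / (((Finset.univ : Finset (Fin M → Bool)).powersetCard S).card : ℝ) ≤ δ :=
  stmt9_general M S hM hS2 δ hδ hδ1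
end

section
/- Let n and a be positive integers with (a : ℝ)² < 2^{n+1} − 2. Then ∑_{i=0}^{a−1} i / (2^n − 1 − i(i−1)/2) ≤ a² / (2^{n+1} − 2 − a²), where the sum and quotients are over the real numbers. (Bound on the collision probability of a classical algorithm making a queries in Simon's problem.) -/
lemma gauss_real (a : ℕ) : ∑ i ∈ Finset.range a, (i : ℝ) = a * (a - 1) / 2 := by
  induction a with
  | zero => simp
  | succ k ih =>
    rw [Finset.sum_range_succ, ih]
    push_cast
    ring

/-- for positive integers `n, a` with `a² < 2^{n+1} − 2`,
`∑_{i=0}^{a−1} i / (2^n − 1 − i(i−1)/2) ≤ a² / (2^{n+1} − 2 − a²)` over the reals. -/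
theorem stmt13 (n a : ℕ) (hn : 0 < n) (ha : 0 < a)
    (h : (a : ℝ) ^ 2 < 2 ^ (n + 1) - 2) :
    ∑ i ∈ Finset.range a, (i : ℝ) / (2 ^ n - 1 - (i : ℝ) * ((i : ℝ) - 1) / 2)
      ≤ (a : ℝ) ^ 2 / (2 ^ (n + 1) - 2 - (a : ℝ) ^ 2) := by
  set D : ℝ := 2 ^ (n + 1) - 2 - (a : ℝ) ^ 2 with hDdef
  have hD : 0 < D := by rw [hDdef]; linarith
  have h2 : (2 : ℝ) ^ (n + 1) = 2 * 2 ^ n := by ring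
  calc ∑ i ∈ Finset.range a, (i : ℝ) / (2 ^ n - 1 - (i : ℝ) * ((i : ℝ) - 1) / 2)
      ≤ ∑ i ∈ Finset.range a, (i : ℝ) / (D / 2) := by
        apply Finset.sum_le_sum
        intro i hi
        have hia : (i : ℝ) ≤ (a : ℝ) := by
          exact_mod_cast (Finset.mem_range.mp hi).le
        have hi0 : (0 : ℝ) ≤ (i : ℝ) := Nat.cast_nonneg i
        have hle : D / 2 ≤ 2 ^ n - 1 - (i : ℝ) * ((i : ℝ) - 1) / 2 := by
          rw [hDdef, h2]; nlinarith
        gcongr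
    _ = (a * (a - 1) / 2) / (D / 2) := by rw [← Finset.sum_div, gauss_real]
    _ = (a : ℝ) * ((a : ℝ) - 1) / D := by
        field_simp
    _ ≤ (a : ℝ) ^ 2 / D := by
        gcongr ?_ / D
        nlinarith [Nat.cast_nonneg (α := ℝ) a]
end
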